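/- arXiv:1810.05891 — 2 statements merged into one kernel-verified Lean document; each statement's English description precedes it below -/
import Mathlib

section
/- If (n, n') is a swap-blocking pair for a matching Φ, then the total utility strictly increases under the corresponding swap: F(Φ^{n↔n'}) > F(Φ). (All players other than n, n', Φ n, Φ n' have unchanged utility, since a swap changes neither the channel of any other user nor the user set of any other channel.) -/
/-- The fiber of a channel `m` under an allocation `Φ`: the set of users assigned to `m`. -/
def fiber {N M : ℕ} (Φ : Fin N → Fin M) (m : Fin M) : Finset (Fin N) :=
  Finset.univ.filter (fun k => Φ k = m)

/-- `Φ` is a matching: every channel serves at most `D` users. -/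
def IsMatching {N M : ℕ} (D : ℕ) (Φ : Fin N → Fin M) : Prop :=
  ∀ m : Fin M, (fiber Φ m).card ≤ D

/-- The swap matching `Φ^{n↔n'}`. -/
def swapMatch {N M : ℕ} (Φ : Fin N → Fin M) (n n' : Fin N) : Fin N → Fin M :=
  fun k => if k = n then Φ n' else if k = n' then Φ n else Φ k

/-- `(n, n')` is a swap-blocking pair for `Φ` (w.r.t. user utilities `u` and channel
utilities `w`): `Φ n ≠ Φ n'`, none of the four involved players `n, n', Φ n, Φ n'`
loses utility when passing to the swap matching `Φ' = Φ^{n↔n'}`, and at least one of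
them strictly gains. -/
def IsBlockingPair {N M : ℕ} (u : Fin N → Fin M → ℝ) (w : Fin M → Finset (Fin N) → ℝ)
    (Φ : Fin N → Fin M) (n n' : Fin N) : Prop :=
  Φ n ≠ Φ n' ∧
    (u n (swapMatch Φ n n' n) ≥ u n (Φ n)) ∧
    (u n' (swapMatch Φ n n' n') ≥ u n' (Φ n')) ∧
    (w (Φ n) (fiber (swapMatch Φ n n') (Φ n)) ≥ w (Φ n) (fiber Φ (Φ n))) ∧
    (w (Φ n') (fiber (swapMatch Φ n n') (Φ n')) ≥ w (Φ n') (fiber Φ (Φ n'))) ∧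
    ((u n (swapMatch Φ n n' n) > u n (Φ n)) ∨
     (u n' (swapMatch Φ n n' n') > u n' (Φ n')) ∨
     (w (Φ n) (fiber (swapMatch Φ n n') (Φ n)) > w (Φ n) (fiber Φ (Φ n))) ∨
     (w (Φ n') (fiber (swapMatch Φ n n') (Φ n')) > w (Φ n') (fiber Φ (Φ n'))))

/-- Total utility of an allocation `Φ`: sum of all user utilities plus all channel
utilities. -/
noncomputable def totalUtility {N M : ℕ} (u : Fin N → Fin M → ℝ)
    (w : Fin M → Finset (Fin N) → ℝ) (Φ : Fin N → Fin M) : ℝ :=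
  (∑ k : Fin N, u k (Φ k)) + (∑ m : Fin M, w m (fiber Φ m))

/-- If `(n, n')` is a swap-blocking pair for a matching `Φ`, then the total utility
strictly increases under the corresponding swap. -/
theorem totalUtility_lt_of_blockingPair
    (N M D : ℕ) (hN : 1 ≤ N) (hM : 1 ≤ M) (hD : 1 ≤ D)
    (u : Fin N → Fin M → ℝ) (w : Fin M → Finset (Fin N) → ℝ)
    (Φ : Fin N → Fin M) (hΦ : IsMatching D Φ)
    (n n' : Fin N) (hb : IsBlockingPair u w Φ n n') :
    totalUtility u w Φ < totalUtility u w (swapMatch Φ n n') := by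
  obtain ⟨hne, h1, h2, h3, h4, hstrict⟩ := hb
  have hnn' : n ≠ n' := fun h => hne (by rw [h])
  set Φ' := swapMatch Φ n n' with hΦ'
  have hΦ'n : Φ' n = Φ n' := by simp [hΦ', swapMatch]
  have hΦ'n' : Φ' n' = Φ n := by simp [hΦ', swapMatch, Ne.symm hnn']
  have hother : ∀ k, k ≠ n → k ≠ n' → Φ' k = Φ k := by
    intro k hk hk'; simp [hΦ', swapMatch, hk, hk']
  have hfiber : ∀ m, m ≠ Φ n → m ≠ Φ n' → fiber Φ' m = fiber Φ m := by
    intro m hm hm'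
    ext k
    simp only [fiber, Finset.mem_filter, Finset.mem_univ, true_and]
    by_cases hk : k = n
    · subst hk; rw [hΦ'n]; exact iff_of_false (Ne.symm hm') (Ne.symm hm)
    · by_cases hk' : k = n'
      · subst hk'; rw [hΦ'n']; exact iff_of_false (Ne.symm hm) (Ne.symm hm')
      · rw [hother k hk hk']
  have hsumU : (∑ k : Fin N, u k (Φ' k)) - (∑ k : Fin N, u k (Φ k)) =
      (u n (Φ' n) - u n (Φ n)) + (u n' (Φ' n') - u n' (Φ n')) := by
    rw [← Finset.sum_sub_distrib]
    rw [← Finset.sum_subset (Finset.subset_univ ({n, n'} : Finset (Fin N)))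
      (fun k _ hk => by
        simp only [Finset.mem_insert, Finset.mem_singleton, not_or] at hk
        rw [hother k hk.1 hk.2, sub_self])]
    rw [Finset.sum_pair hnn']
  have hsumW : (∑ m : Fin M, w m (fiber Φ' m)) - (∑ m : Fin M, w m (fiber Φ m)) =
      (w (Φ n) (fiber Φ' (Φ n)) - w (Φ n) (fiber Φ (Φ n))) +
      (w (Φ n') (fiber Φ' (Φ n')) - w (Φ n') (fiber Φ (Φ n'))) := by
    rw [← Finset.sum_sub_distrib]
    rw [← Finset.sum_subset (Finset.subset_univ ({Φ n, Φ n'} : Finset (Fin M)))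
      (fun m _ hm => by
        simp only [Finset.mem_insert, Finset.mem_singleton, not_or] at hm
        rw [hfiber m hm.1 hm.2, sub_self])]
    rw [Finset.sum_pair hne]
  rw [← sub_pos]
  have key : totalUtility u w Φ' - totalUtility u w Φ =
      ((∑ k : Fin N, u k (Φ' k)) - (∑ k : Fin N, u k (Φ k))) +
      ((∑ m : Fin M, w m (fiber Φ' m)) - (∑ m : Fin M, w m (fiber Φ m))) := by
    unfold totalUtility; ring
  rw [key, hsumU, hsumW]
  rcases hstrict with h | h | h | h <;>
    [linarith [h2, h3, h4]; linarith [h1, h3, h4]; linarith [h1, h2, h4]; linarith [h1, h2, h3]]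
end

section
/- (Theorem 2, Convergence of ECAA) Every sequence Φ₀, Φ₁, …, Φ_k of matchings in which each Φ_{i+1} is the swap matching of Φ_i at some swap-blocking pair of Φ_i consists of pairwise distinct matchings; consequently every such sequence has length k < M^N, and there is no infinite such sequence. In other words, the swap-matching phase of ECAA converges after a finite number of swap operations. -/
/-!
The total utility of all users and all channels is a potential: a swap at `(n, n')` changes
only the utilities of the four players `n`, `n'`, `Φ n`, `Φ n'`, so at a swap-blocking pair it
increases strictly. Hence the matchings along a swap chain are pairwise distinct, and a chain
of `k` swaps visits `k + 1` of the `M ^ N` maps `Fin N → Fin M`. An infinite chain would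
contain one with `M ^ N` swaps.
-/

open Finset

theorem sum_sub_sum_eq_add_of_eq_off_pair {α G : Type*} [Fintype α] [AddCommGroup G]
    {f g : α → G} {a b : α} (hab : a ≠ b) (h : ∀ x, x ≠ a ∧ x ≠ b → f x = g x) :
    ∑ x, f x - ∑ x, g x = (f a - g a) + (f b - g b) := by
  rw [← sum_sub_distrib]
  exact Fintype.sum_eq_add a b hab fun x hx => sub_eq_zero.2 (h x hx)

section

variable {N M : ℕ}

noncomputable def potential (u : Fin N → Fin M → ℝ) (w : Fin M → Finset (Fin N) → ℝ)
    (Φ : Fin N → Fin M) : ℝ :=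
  ∑ n, u n (Φ n) + ∑ m, w m (fiber Φ m)

def IsBlockingSwapChain (u : Fin N → Fin M → ℝ) (w : Fin M → Finset (Fin N) → ℝ)
    (Φ : ℕ → Fin N → Fin M) (k : ℕ) : Prop :=
  ∀ i < k, ∃ n n' : Fin N, IsBlockingPair u w (Φ i) n n' ∧ Φ (i + 1) = swapMatch (Φ i) n n'

theorem swapMatch_apply_of_ne (Φ : Fin N → Fin M) {n n' k : Fin N} (hn : k ≠ n)
    (hn' : k ≠ n') : swapMatch Φ n n' k = Φ k := by
  simp [swapMatch, hn, hn']

theorem fiber_swapMatch_of_ne (Φ : Fin N → Fin M) {n n' : Fin N} {m : Fin M} (hn : Φ n ≠ m)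
    (hn' : Φ n' ≠ m) : fiber (swapMatch Φ n n') m = fiber Φ m := by
  ext k
  simp only [fiber, Finset.mem_filter, Finset.mem_univ, true_and]
  unfold swapMatch
  split_ifs with hkn hkn' <;> subst_vars <;> simp [hn, hn']

theorem potential_lt_potential_swapMatch {u : Fin N → Fin M → ℝ}
    {w : Fin M → Finset (Fin N) → ℝ} {Φ : Fin N → Fin M} {n n' : Fin N}
    (hb : IsBlockingPair u w Φ n n') : potential u w Φ < potential u w (swapMatch Φ n n') := by
  obtain ⟨hne, hn, hn', hm, hm', hstrict⟩ := hb
  have husers : ∑ k, u k (swapMatch Φ n n' k) - ∑ k, u k (Φ k) =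
      (u n (swapMatch Φ n n' n) - u n (Φ n)) + (u n' (swapMatch Φ n n' n') - u n' (Φ n')) :=
    sum_sub_sum_eq_add_of_eq_off_pair (ne_of_apply_ne Φ hne) fun k hk => by
      rw [swapMatch_apply_of_ne Φ hk.1 hk.2]
  have hchannels : ∑ m, w m (fiber (swapMatch Φ n n') m) - ∑ m, w m (fiber Φ m) =
      (w (Φ n) (fiber (swapMatch Φ n n') (Φ n)) - w (Φ n) (fiber Φ (Φ n))) +
      (w (Φ n') (fiber (swapMatch Φ n n') (Φ n')) - w (Φ n') (fiber Φ (Φ n'))) :=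
    sum_sub_sum_eq_add_of_eq_off_pair hne fun m hm => by
      rw [fiber_swapMatch_of_ne Φ (Ne.symm hm.1) (Ne.symm hm.2)]
  unfold potential
  rcases hstrict with h | h | h | h <;> linarith

variable {u : Fin N → Fin M → ℝ} {w : Fin M → Finset (Fin N) → ℝ} {Φ : ℕ → Fin N → Fin M}
  {k : ℕ}

theorem IsBlockingSwapChain.strictMonoOn_potential (hΦ : IsBlockingSwapChain u w Φ k) :
    StrictMonoOn (fun i => potential u w (Φ i)) (Set.Iic k) :=
  strictMonoOn_Iic_of_lt_succ fun i hi => by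
    obtain ⟨n, n', hb, hnext⟩ := hΦ i hi
    simpa only [Order.succ_eq_add_one, hnext] using potential_lt_potential_swapMatch hb

theorem IsBlockingSwapChain.injOn (hΦ : IsBlockingSwapChain u w Φ k) :
    Set.InjOn Φ (Set.Iic k) :=
  fun _ hi _ hj h => hΦ.strictMonoOn_potential.injOn hi hj (congrArg (potential u w) h)

theorem IsBlockingSwapChain.lt_pow (hΦ : IsBlockingSwapChain u w Φ k) : k < M ^ N := by
  have hcard := card_le_card_of_injOn Φ (s := Iic k) (t := univ) (fun _ _ => mem_univ _)
    (by simpa only [coe_Iic] using hΦ.injOn)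
  simp only [Nat.card_Iic, card_univ, Fintype.card_fun, Fintype.card_fin] at hcard
  omega

end

theorem ecaa_convergence_general
    (N M D : ℕ)
    (u : Fin N → Fin M → ℝ) (w : Fin M → Finset (Fin N) → ℝ)
    (Φ : ℕ → (Fin N → Fin M)) (k : ℕ)
    (hstep : ∀ i < k, ∃ n n' : Fin N,
      IsBlockingPair u w (Φ i) n n' ∧ Φ (i + 1) = swapMatch (Φ i) n n') :
    (∀ i ≤ k, ∀ j ≤ k, i ≠ j → Φ i ≠ Φ j) ∧
    k < M ^ N ∧
    ¬ ∃ Ψ : ℕ → (Fin N → Fin M), (∀ i, IsMatching D (Ψ i)) ∧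
        ∀ i, ∃ n n' : Fin N,
          IsBlockingPair u w (Ψ i) n n' ∧ Ψ (i + 1) = swapMatch (Ψ i) n n' := by
  have hchain : IsBlockingSwapChain u w Φ k := hstep
  refine ⟨fun i hi j hj hij h => hij (hchain.injOn hi hj h), hchain.lt_pow, ?_⟩
  rintro ⟨Ψ, -, hΨ⟩
  have hΨchain : IsBlockingSwapChain u w Ψ (M ^ N) := fun i _ => hΨ i
  exact hΨchain.lt_pow.false

/-- **Convergence of ECAA.** In any sequence of matchings in which each one is obtained
from the previous one by a swap at a swap-blocking pair, all matchings are pairwise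
distinct; consequently the sequence has length `k < M ^ N`, and no infinite such
sequence exists. -/
theorem ecaa_convergence
    (N M D : ℕ) (hN : 1 ≤ N) (hM : 1 ≤ M) (hD : 1 ≤ D)
    (u : Fin N → Fin M → ℝ) (w : Fin M → Finset (Fin N) → ℝ)
    (Φ : ℕ → (Fin N → Fin M)) (k : ℕ)
    (hmatch : ∀ i ≤ k, IsMatching D (Φ i))
    (hstep : ∀ i < k, ∃ n n' : Fin N,
      IsBlockingPair u w (Φ i) n n' ∧ Φ (i + 1) = swapMatch (Φ i) n n') :
    (∀ i ≤ k, ∀ j ≤ k, i ≠ j → Φ i ≠ Φ j) ∧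
    k < M ^ N ∧
    ¬ ∃ Ψ : ℕ → (Fin N → Fin M), (∀ i, IsMatching D (Ψ i)) ∧
        ∀ i, ∃ n n' : Fin N,
          IsBlockingPair u w (Ψ i) n n' ∧ Ψ (i + 1) = swapMatch (Ψ i) n n' :=
  ecaa_convergence_general N M D u w Φ k hstep
end
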